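/- Let Y₁, …, Yₙ (n > 1) be random variables, not necessarily independent, each taking values in a countable set, and let S = Y₁ + ⋯ + Yₙ be integrable. Suppose for each i there is a constant cᵢ ≥ 0 such that for every tuple (y₁,…,y_{i−1}) and every pair of values y, y′ with Pr(Y₁=y₁,…,Y_{i−1}=y_{i−1}, Y_i=y) > 0 and Pr(Y₁=y₁,…,Y_{i−1}=y_{i−1}, Y_i=y′) > 0, one has |E[S | Y₁=y₁,…,Y_{i−1}=y_{i−1}, Y_i=y] − E[S | Y₁=y₁,…,Y_{i−1}=y_{i−1}, Y_i=y′]| ≤ cᵢ. Then the Doob sequence Z₀ = E[S], Z_i = E[S | σ(Y₁,…,Y_i)] for i = 1,…,n, is a martingale with respect to the filtration (σ(Y₁,…,Y_i))ᵢ, Zₙ = S almost surely, and |Z_i − Z_{i−1}| ≤ cᵢ almost surely for every i. -/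

import Mathlib

/-!
`Z_k` is the conditional expectation of `S` given the countably-valued vector
`(Y r)_{r < k}`, i.e. almost surely the average of `S` over the level set of that vector
through `ω`. A level set of `(Y r)_{r < i}` splits into level sets of `(Y r)_{r ≤ i}`, on which
`Z_{i+1}` takes values pairwise within `c_i` of each other by hypothesis; by the tower property
`Z_i` is the average of `Z_{i+1}` over the coarser level set, hence within `c_i` of each of them.
-/

open MeasureTheory ProbabilityTheory

section LevelSets

variable {Ω β E : Type*} {mΩ : MeasurableSpace Ω} {μ : Measure Ω} {W : Ω → β}
  [NormedAddCommGroup E] [NormedSpace ℝ E] [CompleteSpace E]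

theorem ae_measure_preimage_singleton_ne_zero (hW : (Set.range W).Countable) :
    ∀ᵐ ω ∂μ, μ (W ⁻¹' {W ω}) ≠ 0 := by
  have hnull : μ (⋃ v ∈ {v ∈ Set.range W | μ (W ⁻¹' {v}) = 0}, W ⁻¹' {v}) = 0 :=
    (measure_biUnion_null_iff (hW.mono (Set.sep_subset _ _))).2 fun _ hv => hv.2
  refine measure_mono_null (fun ω hω => ?_) hnull
  exact Set.mem_biUnion ⟨Set.mem_range_self ω, not_not.1 hω⟩ rfl

variable [MeasurableSpace β] [MeasurableSingletonClass β] [IsFiniteMeasure μ]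

theorem condExp_comap_ae_eq_setAverage (hWm : Measurable W) (hW : (Set.range W).Countable)
    {f : Ω → E} (hf : Integrable f μ) :
    μ[f | MeasurableSpace.comap W inferInstance] =ᵐ[μ]
      fun ω => ⨍ x in W ⁻¹' {W ω}, f x ∂μ := by
  filter_upwards [ae_measure_preimage_singleton_ne_zero hW] with ω hω
  set A := W ⁻¹' {W ω}
  have hA : MeasurableSet[MeasurableSpace.comap W inferInstance] A :=
    ⟨_, measurableSet_singleton _, rfl⟩
  have hconst : ∀ x ∈ A, μ[f | MeasurableSpace.comap W inferInstance] x =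
      μ[f | MeasurableSpace.comap W inferInstance] ω :=
    fun x hx => stronglyMeasurable_condExp.factorsThrough hx
  calc μ[f | MeasurableSpace.comap W inferInstance] ω
      = ⨍ x in A, μ[f | MeasurableSpace.comap W inferInstance] x ∂μ := by
        rw [setAverage_congr_fun (hWm (measurableSet_singleton _)) (.of_forall hconst),
          setAverage_const hω (measure_ne_top _ _)]
    _ = ⨍ x in A, f x ∂μ := by
        rw [setAverage_eq, setAverage_eq, setIntegral_condExp hWm.comap_le hf hA]

theorem ae_norm_condExp_comap_sub_le (hWm : Measurable W) (hW : (Set.range W).Countable)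
    {g : Ω → E} (hg : Integrable g μ) {c : ℝ}
    (hosc : ∀ᵐ ω ∂μ, ∀ᵐ x ∂μ.restrict (W ⁻¹' {W ω}), ‖g x - g ω‖ ≤ c) :
    ∀ᵐ ω ∂μ, ‖μ[g | MeasurableSpace.comap W inferInstance] ω - g ω‖ ≤ c := by
  filter_upwards [condExp_comap_ae_eq_setAverage hWm hW hg,
    ae_measure_preimage_singleton_ne_zero hW, hosc] with ω hω hpos hωosc
  rw [hω, ← dist_eq_norm, ← Metric.mem_closedBall]
  refine (convex_closedBall _ _).set_average_mem Metric.isClosed_closedBall hpos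
    (measure_ne_top _ _) ?_ hg.integrableOn
  filter_upwards [hωosc] with x hx
  rwa [Metric.mem_closedBall, dist_eq_norm]

end LevelSets

section History

variable {Ω β : Type*} {n : ℕ} (Y : Fin n → Ω → β)

def history (k : ℕ) (ω : Ω) : {r : Fin n // (r : ℕ) < k} → β := fun r => Y r ω

theorem history_preimage_singleton (k : ℕ) (ω : Ω) :
    history Y k ⁻¹' {history Y k ω} = {x | ∀ r : Fin n, (r : ℕ) < k → Y r x = Y r ω} := by
  ext x
  simp [history, funext_iff]

theorem history_succ_preimage_singleton (i : Fin n) {ω : Ω} {ys : Fin n → β}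
    (hω : ∀ r, r < i → Y r ω = ys r) :
    history Y (i + 1) ⁻¹' {history Y (i + 1) ω} =
      {x | (∀ r, r < i → Y r x = ys r) ∧ Y i x = Y i ω} := by
  ext x
  simp only [history_preimage_singleton, Set.mem_ofPred_eq, Nat.lt_succ_iff_lt_or_eq,
    ← Fin.lt_def, ← Fin.ext_iff]
  constructor
  · intro h
    exact ⟨fun r hr => (h r (.inl hr)).trans (hω r hr), h i (.inr rfl)⟩
  · rintro ⟨hlt, heq⟩ r (hr | rfl)
    · exact (hlt r hr).trans (hω r hr).symm
    · exact heq

theorem countable_range_history (hY : ∀ r, (Set.range (Y r)).Countable) (k : ℕ) :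
    (Set.range (history Y k)).Countable :=
  (Set.countable_univ_pi fun r : {r : Fin n // (r : ℕ) < k} => hY r).mono <| by
    rintro _ ⟨ω, rfl⟩ r -
    exact Set.mem_range_self ω

variable [MeasurableSpace β]

theorem measurable_history {mΩ : MeasurableSpace Ω} (hY : ∀ r, Measurable (Y r)) (k : ℕ) :
    Measurable (history Y k) :=
  measurable_pi_lambda _ fun r => hY r

theorem comap_history (k : ℕ) :
    MeasurableSpace.comap (history Y k) inferInstance =
      ⨆ (r : Fin n) (_ : (r : ℕ) < k), MeasurableSpace.comap (Y r) inferInstance := by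
  rw [iSup_subtype', ← MeasurableSpace.comap_process_pi]
  rfl

theorem comap_history_mono :
    Monotone fun k => MeasurableSpace.comap (history Y k) inferInstance := fun _ _ hkl => by
  simp only [comap_history]
  exact biSup_mono fun _ hr => hr.trans_le hkl

end History

section DoobIncrements

variable {Ω : Type*} {mΩ : MeasurableSpace Ω} {μ : Measure Ω} [IsFiniteMeasure μ] {n : ℕ}
  {Y : Fin n → Ω → ℝ} {S : Ω → ℝ}

theorem ae_abs_condExp_history_succ_sub_le (hYm : ∀ r, Measurable (Y r))
    (hYc : ∀ r, (Set.range (Y r)).Countable) (hS : Integrable S μ) (i : Fin n) {c : ℝ}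
    (hdiff : ∀ (ys : Fin n → ℝ) (y y' : ℝ),
      μ {ω | (∀ r, r < i → Y r ω = ys r) ∧ Y i ω = y} ≠ 0 →
      μ {ω | (∀ r, r < i → Y r ω = ys r) ∧ Y i ω = y'} ≠ 0 →
      |(⨍ ω in {ω | (∀ r, r < i → Y r ω = ys r) ∧ Y i ω = y}, S ω ∂μ) -
        ⨍ ω in {ω | (∀ r, r < i → Y r ω = ys r) ∧ Y i ω = y'}, S ω ∂μ| ≤ c) :
    ∀ᵐ ω ∂μ, |μ[S | MeasurableSpace.comap (history Y (i + 1)) inferInstance] ω -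
      μ[S | MeasurableSpace.comap (history Y i) inferInstance] ω| ≤ c := by
  have hW := measurable_history Y hYm
  have hWc := countable_range_history Y hYc
  have hpos := ae_measure_preimage_singleton_ne_zero (μ := μ) (hWc (i + 1))
  have hZ := condExp_comap_ae_eq_setAverage (hW (i + 1)) (hWc (i + 1)) hS
  -- Inside a level set of `history Y i`, the level sets of `history Y (i + 1)` are the sets
  -- compared in `hdiff`.
  have hosc : ∀ᵐ ω ∂μ, ∀ᵐ x ∂μ.restrict (history Y i ⁻¹' {history Y i ω}),
      ‖μ[S | MeasurableSpace.comap (history Y (i + 1)) inferInstance] x -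
        μ[S | MeasurableSpace.comap (history Y (i + 1)) inferInstance] ω‖ ≤ c := by
    filter_upwards [hpos, hZ] with ω hω hZω
    filter_upwards [ae_restrict_of_ae hpos, ae_restrict_of_ae hZ,
      ae_restrict_mem (hW i (measurableSet_singleton _))] with x hx hZx hxω
    rw [history_preimage_singleton] at hxω
    rw [history_succ_preimage_singleton Y i hxω] at hx hZx
    rw [history_succ_preimage_singleton Y i (ys := fun r => Y r ω) fun _ _ => rfl] at hω hZω
    rw [Real.norm_eq_abs, hZx, hZω]
    exact hdiff _ _ _ hx hω
  have htower := condExp_condExp_of_le (μ := μ) (f := S)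
    (comap_history_mono Y (Nat.le_succ i)) (hW (i + 1)).comap_le
  filter_upwards [ae_norm_condExp_comap_sub_le (hW i) (hWc i) integrable_condExp hosc, htower]
    with ω h hω
  rwa [hω, Real.norm_eq_abs, abs_sub_comm] at h

end DoobIncrements

theorem doob_sequence_martingale_bounded_differences_general
    {Ω : Type*} [MeasureSpace Ω] [IsProbabilityMeasure (ℙ : Measure Ω)]
    (n : ℕ)
    (Y : Fin n → Ω → ℝ) (hYmeas : ∀ i, Measurable (Y i))
    (hYcount : ∀ i, (Set.range (Y i)).Countable)
    (S : Ω → ℝ) (hS : S = fun ω => ∑ i, Y i ω)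
    (hSint : Integrable S ℙ)
    (c : Fin n → ℝ)
    (hdiff : ∀ (i : Fin n) (ys : Fin n → ℝ) (y y' : ℝ),
      ℙ {ω | (∀ r, r < i → Y r ω = ys r) ∧ Y i ω = y} ≠ 0 →
      ℙ {ω | (∀ r, r < i → Y r ω = ys r) ∧ Y i ω = y'} ≠ 0 →
      |(∫ ω in {ω | (∀ r, r < i → Y r ω = ys r) ∧ Y i ω = y}, S ω ∂ℙ) /
          (ℙ {ω | (∀ r, r < i → Y r ω = ys r) ∧ Y i ω = y}).toReal -
        (∫ ω in {ω | (∀ r, r < i → Y r ω = ys r) ∧ Y i ω = y'}, S ω ∂ℙ) /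
          (ℙ {ω | (∀ r, r < i → Y r ω = ys r) ∧ Y i ω = y'}).toReal| ≤ c i)
    (ℱ : Filtration ℕ (inferInstance : MeasurableSpace Ω))
    (hℱ : ∀ i : ℕ, ℱ i
      = ⨆ (r : Fin n) (_ : (r : ℕ) < i), MeasurableSpace.comap (Y r) inferInstance)
    (Z : ℕ → Ω → ℝ)
    (hZ0 : Z 0 = fun _ => ∫ x, S x ∂ℙ)
    (hZ : ∀ i : ℕ, 1 ≤ i → Z i = ℙ[S|ℱ i]) :
    Martingale Z ℱ ℙ ∧ Z n =ᵐ[ℙ] S ∧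
      ∀ i : Fin n, ∀ᵐ ω ∂ℙ, |Z ((i : ℕ) + 1) ω - Z (i : ℕ) ω| ≤ c i := by
  have hℱ_history : ∀ k, ℱ k = MeasurableSpace.comap (history Y k) inferInstance := fun k => by
    rw [hℱ, comap_history]
  have hZ_condExp : Z = fun k => ℙ[S|ℱ k] := by
    funext k
    rcases Nat.eq_zero_or_pos k with rfl | hk
    · simp [hZ0, hℱ 0, condExp_bot]
    · exact hZ k hk
  have hS_meas : StronglyMeasurable[ℱ n] S := by
    rw [hS, hℱ_history n]
    exact (Finset.measurable_sum _ fun r _ => (measurable_pi_apply ⟨r, r.isLt⟩).comp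
      (comap_measurable (history Y n))).stronglyMeasurable
  refine ⟨hZ_condExp ▸ martingale_condExp S ℱ ℙ, ?_, fun i => ?_⟩
  · rw [hZ_condExp]
    exact .of_eq (condExp_of_stronglyMeasurable (ℱ.le n) hS_meas hSint)
  · simp only [hZ_condExp, hℱ_history]
    refine ae_abs_condExp_history_succ_sub_le hYmeas hYcount hSint i fun ys y y' h h' => ?_
    simpa only [setAverage_eq, measureReal_def, smul_eq_mul, div_eq_inv_mul] using
      hdiff i ys y y' h h'

/-- the Doob sequence `Z₀ = E[S]`, `Z_i = E[S | σ(Y₁,…,Y_i)]` associated with a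
sum `S = Y₁ + ⋯ + Yₙ` of (not necessarily independent) countably-valued random variables is a
martingale with respect to the filtration `σ(Y₁,…,Y_i)`, ends at `Zₙ = S` a.s., and has
differences bounded by the constants `cᵢ` from the conditional-expectation bounded-difference
condition. -/
theorem doob_sequence_martingale_bounded_differences
    {Ω : Type*} [MeasureSpace Ω] [IsProbabilityMeasure (ℙ : Measure Ω)]
    (n : ℕ) (hn : 1 < n)
    (Y : Fin n → Ω → ℝ) (hYmeas : ∀ i, Measurable (Y i))
    (hYcount : ∀ i, (Set.range (Y i)).Countable)
    (S : Ω → ℝ) (hS : S = fun ω => ∑ i, Y i ω)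
    (hSint : Integrable S ℙ)
    (c : Fin n → ℝ) (hc : ∀ i, 0 ≤ c i)
    (hdiff : ∀ (i : Fin n) (ys : Fin n → ℝ) (y y' : ℝ),
      ℙ {ω | (∀ r, r < i → Y r ω = ys r) ∧ Y i ω = y} ≠ 0 →
      ℙ {ω | (∀ r, r < i → Y r ω = ys r) ∧ Y i ω = y'} ≠ 0 →
      |(∫ ω in {ω | (∀ r, r < i → Y r ω = ys r) ∧ Y i ω = y}, S ω ∂ℙ) /
          (ℙ {ω | (∀ r, r < i → Y r ω = ys r) ∧ Y i ω = y}).toReal -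
        (∫ ω in {ω | (∀ r, r < i → Y r ω = ys r) ∧ Y i ω = y'}, S ω ∂ℙ) /
          (ℙ {ω | (∀ r, r < i → Y r ω = ys r) ∧ Y i ω = y'}).toReal| ≤ c i)
    (ℱ : Filtration ℕ (inferInstance : MeasurableSpace Ω))
    (hℱ : ∀ i : ℕ, ℱ i
      = ⨆ (r : Fin n) (_ : (r : ℕ) < i), MeasurableSpace.comap (Y r) inferInstance)
    (Z : ℕ → Ω → ℝ)
    (hZ0 : Z 0 = fun _ => ∫ x, S x ∂ℙ)
    (hZ : ∀ i : ℕ, 1 ≤ i → Z i = ℙ[S|ℱ i]) :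
    Martingale Z ℱ ℙ ∧ Z n =ᵐ[ℙ] S ∧
      ∀ i : Fin n, ∀ᵐ ω ∂ℙ, |Z ((i : ℕ) + 1) ω - Z (i : ℕ) ω| ≤ c i :=
  doob_sequence_martingale_bounded_differences_general n Y hYmeas hYcount S hS hSint c hdiff ℱ hℱ Z
    hZ0 hZ
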